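/- arXiv:1809.04965 — 2 statements merged into one kernel-verified Lean document; each statement's English description precedes it below -/
import Mathlib

section
/- For a (k,n)-bounded affine permutation f with Grassmann necklace (I_1,...,I_n), each set I_a defined by I_a = { f(b) mod n : b < a, f(b) ≥ a } has exactly k elements. -/
/-!
Call `b` a crossing of `a` if `b < a ≤ f b`; by boundedness the crossings of `a` lie in
`[a - n, a - 1]`, and `f` maps them to pairwise incongruent values in `[a, a + n)`, so `#I_a` is
their number `N(a)`. Passing from `a` to `a + 1` loses the preimage of `a` and gains `a` itself, so
`N` is constant. Folding crossings mod `n` and double counting gives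
`∑_{a=1}^n N(a) = ∑_{b=1}^n (f b - b) = kn`, hence `N ≡ k`.
-/

/-- A `(k,n)`-bounded affine permutation: a bijection `f : ℤ → ℤ` with
`f(i+n) = f(i) + n`, `∑_{i=1}^n f(i) = C(n+1,2) + kn`, and `i ≤ f(i) ≤ i + n`. -/
def IsBAP (k n : ℕ) (f : ℤ → ℤ) : Prop :=
  Function.Bijective f ∧ (∀ i, f (i + n) = f i + n) ∧
  (∑ i ∈ Finset.Icc (1 : ℤ) (n : ℤ), f i) = ((n + 1).choose 2 : ℤ) + (k : ℤ) * n ∧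
  ∀ i, i ≤ f i ∧ f i ≤ i + n

/-- The representative in `{1,…,n}` of an integer modulo `n`. -/
def res (n : ℕ) (x : ℤ) : ℕ := ((x - 1) % (n : ℤ) + 1).toNat

/-- The Grassmann necklace of `f`: `I_a = { f(b) mod n : b < a, f(b) ≥ a }` with
representatives taken in `{1,…,n}` (only `b ∈ [a-n, a-1]` can contribute, by
boundedness). -/
noncomputable def necklaceOf (n : ℕ) (f : ℤ → ℤ) : ℕ → Finset ℕ := fun a =>
  ((Finset.Icc ((a : ℤ) - n) ((a : ℤ) - 1)).filter fun b => (a : ℤ) ≤ f b).image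
    fun b => res n (f b)

open Finset

theorem Int.ModEq.eq_of_mem_Ico {n a x y : ℤ} (h : x ≡ y [ZMOD n]) (hx : x ∈ Set.Ico a (a + n))
    (hy : y ∈ Set.Ico a (a + n)) : x = y := by
  rw [Set.mem_Ico] at hx hy
  have := Int.eq_zero_of_abs_lt_dvd h.dvd (abs_sub_lt_iff.2 ⟨by omega, by omega⟩)
  omega

theorem modEq_of_res_eq {n : ℕ} (hn : 0 < n) {x y : ℤ} (h : res n x = res n y) :
    x ≡ y [ZMOD n] := by
  have hn' : (n : ℤ) ≠ 0 := by omega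
  have := Int.emod_nonneg (x - 1) hn'
  have := Int.emod_nonneg (y - 1) hn'
  have h' : x - 1 ≡ y - 1 [ZMOD n] := by unfold res at h; unfold Int.ModEq; omega
  simpa using h'.add_right 1

theorem Int.sum_Icc_one_id (n : ℕ) : ∑ i ∈ Icc (1 : ℤ) n, i = ((n + 1).choose 2 : ℤ) := by
  induction n with
  | zero => simp
  | succ n ih =>
    rw [Nat.cast_succ, ← insert_Icc_right_eq_Icc_add_one (by omega), sum_insert (by simp), ih,
      Nat.choose_succ_succ' (n + 1), Nat.choose_one_right]
    push_cast
    ring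

theorem card_filter_mem_Ioc_add_card_filter_add_mem_Ioc {n : ℕ} {b c : ℤ}
    (hb : b ∈ Icc 1 (n : ℤ)) (hbc : b ≤ c) (hcb : c ≤ b + n) :
    ((#{a ∈ Icc 1 (n : ℤ) | a ∈ Ioc b c} + #{a ∈ Icc 1 (n : ℤ) | a + (n : ℤ) ∈ Ioc b c} : ℕ) : ℤ) =
      c - b := by
  rw [mem_Icc] at hb
  have h₁ : {a ∈ Icc 1 (n : ℤ) | a ∈ Ioc b c} = Ioc b (min n c) := by
    ext a; simp only [mem_filter, mem_Icc, mem_Ioc, le_min_iff]; omega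
  have h₂ : {a ∈ Icc 1 (n : ℤ) | a + (n : ℤ) ∈ Ioc b c} = Icc 1 (c - n) := by
    ext a; simp only [mem_filter, mem_Icc, mem_Ioc]; omega
  rw [h₁, h₂, Int.card_Ioc, Int.card_Icc]
  omega

-- `b ∈ crossings n f a` iff the arc from `b` to `f b` passes over `a - 1/2`; when
-- `f b ≤ b + n`, the window `[a - n, a - 1]` holds all such `b`.
noncomputable def crossings (n : ℕ) (f : ℤ → ℤ) (a : ℤ) : Finset ℤ :=
  {b ∈ Icc (a - n) (a - 1) | a ≤ f b}

variable {n : ℕ} {f : ℤ → ℤ}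

theorem necklaceOf_eq_image_crossings (a : ℕ) :
    necklaceOf n f a = (crossings n f a).image (res n ∘ f) := rfl

theorem card_image_res_crossings (hf : Function.Injective f) (hbd : ∀ i, i ≤ f i ∧ f i ≤ i + n)
    (a : ℤ) : #((crossings n f a).image (res n ∘ f)) = #(crossings n f a) := by
  refine card_image_of_injOn fun b hb c hc hbc => hf ?_
  simp only [crossings, coe_filter, mem_Icc, Set.mem_ofPred_eq] at hb hc
  have := hbd b
  have := hbd c
  -- `f b` and `f c` both lie in the window `[a, a + n)` of residues
  exact (modEq_of_res_eq (by omega) hbc).eq_of_mem_Ico (a := a) ⟨by omega, by omega⟩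
    ⟨by omega, by omega⟩

theorem card_crossings_add_one (hf : Function.Bijective f) (hbd : ∀ i, i ≤ f i ∧ f i ≤ i + n)
    (a : ℤ) : #(crossings n f (a + 1)) = #(crossings n f a) := by
  obtain ⟨p, hp⟩ := hf.surjective a
  have h₁ : {b ∈ Icc (a - n) a | a ≤ f b} = insert a (crossings n f a) := by
    ext b; simp only [crossings, mem_insert, mem_filter, mem_Icc]; have := hbd b; omega
  have h₂ : {b ∈ Icc (a - n) a | a ≤ f b} = insert p (crossings n f (a + 1)) := by
    ext b
    simp only [crossings, mem_insert, mem_filter, mem_Icc]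
    have := hbd b
    have := hbd p
    constructor
    · intro h
      by_cases hb : f b = a
      · exact .inl (hf.injective (hb.trans hp.symm))
      · omega
    · rintro (rfl | h) <;> omega
  have := congrArg card (h₁.symm.trans h₂)
  rwa [card_insert_of_notMem (by simp [crossings]), card_insert_of_notMem (by simp [crossings, hp]),
    add_left_inj, eq_comm] at this

theorem card_crossings_eq_card_crossings_zero (hf : Function.Bijective f)
    (hbd : ∀ i, i ≤ f i ∧ f i ≤ i + n) (a : ℤ) : #(crossings n f a) = #(crossings n f 0) := by
  have hperiodic : Function.Periodic (fun a => #(crossings n f a)) 1 :=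
    card_crossings_add_one hf hbd
  simpa using hperiodic.int_mul_eq a

theorem card_crossings_eq_add (hper : ∀ i, f (i + n) = f i + n) (hbd : ∀ i, i ≤ f i ∧ f i ≤ i + n)
    {a : ℤ} (ha : a ∈ Icc 1 (n : ℤ)) :
    #(crossings n f a) = #{b ∈ Icc 1 (n : ℤ) | a ∈ Ioc b (f b)} +
      #{b ∈ Icc 1 (n : ℤ) | a + (n : ℤ) ∈ Ioc b (f b)} := by
  rw [mem_Icc] at ha
  rw [← card_filter_add_card_filter_not (s := crossings n f a) (p := fun b => 1 ≤ b)]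
  congr 1
  · congr 1
    ext b
    simp only [crossings, filter_filter, mem_filter, mem_Icc, mem_Ioc]
    have := hbd b
    omega
  · apply card_nbij' (· + (n : ℤ)) (· - n)
    · intro b hb
      simp only [crossings, filter_filter, coe_filter, mem_Icc, mem_Ioc, Set.mem_ofPred_eq] at hb ⊢
      have := hper b
      omega
    · intro c hc
      simp only [crossings, filter_filter, coe_filter, mem_Icc, mem_Ioc, Set.mem_ofPred_eq] at hc ⊢
      have := hper (c - n)
      rw [sub_add_cancel] at this
      have := hbd c
      omega
    · intro b _; simp
    · intro c _; simp

theorem sum_card_crossings {k : ℕ} (hf : IsBAP k n f) :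
    ∑ a ∈ Icc 1 (n : ℤ), (#(crossings n f a) : ℤ) = k * n := by
  obtain ⟨-, hper, hsum, hbd⟩ := hf
  calc ∑ a ∈ Icc 1 (n : ℤ), (#(crossings n f a) : ℤ)
      = ∑ b ∈ Icc 1 (n : ℤ), ((#{a ∈ Icc 1 (n : ℤ) | a ∈ Ioc b (f b)} +
          #{a ∈ Icc 1 (n : ℤ) | a + (n : ℤ) ∈ Ioc b (f b)} : ℕ) : ℤ) := by
        rw [sum_congr rfl fun a ha => by rw [card_crossings_eq_add hper hbd ha]]
        push_cast [sum_add_distrib]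
        congr 1 <;> exact_mod_cast sum_card_bipartiteAbove_eq_sum_card_bipartiteBelow _
    _ = ∑ b ∈ Icc 1 (n : ℤ), (f b - b) := by
        refine sum_congr rfl fun b hb => ?_
        simpa using card_filter_mem_Ioc_add_card_filter_add_mem_Ioc hb (hbd b).1 (hbd b).2
    _ = k * n := by
        rw [sum_sub_distrib, hsum, Int.sum_Icc_one_id]
        ring

theorem stmt_3_general (k n : ℕ) (f : ℤ → ℤ) (hf : IsBAP k n f) :
    ∀ a, 1 ≤ a → a ≤ n → (necklaceOf n f a).card = k := by
  intro a ha₁ ha₂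
  obtain ⟨hbij, -, -, hbd⟩ := id hf
  have hconst := card_crossings_eq_card_crossings_zero hbij hbd
  have hsum := sum_card_crossings hf
  simp only [hconst, sum_const, Int.card_Icc, add_sub_cancel_right, Int.toNat_natCast,
    nsmul_eq_mul] at hsum
  have hk : #(crossings n f 0) = k := by
    have : (n : ℤ) ≠ 0 := by omega
    exact_mod_cast mul_left_cancel₀ this (hsum.trans (mul_comm _ _))
  rw [necklaceOf_eq_image_crossings, card_image_res_crossings hbij.injective hbd, hconst, hk]

/-- For a `(k,n)`-bounded affine permutation `f`, each member
`I_a = { f(b) mod n : b < a, f(b) ≥ a }` of the Grassmann necklace of `f` has exactly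
`k` elements. -/
theorem stmt_3 (k n : ℕ) (hn : 0 < n) (f : ℤ → ℤ) (hf : IsBAP k n f) :
    ∀ a, 1 ≤ a → a ≤ n → (necklaceOf n f a).card = k :=
  stmt_3_general k n f hf
end

section
/- If (i_a, j) is a strand of the partial noncrossing matching τ(𝐈,J) and swapping i_a with j yields a standard pair, then there exists a unique strand (i_b, j') of τ(𝐈,J) such that (i_a,j) is nested immediately under (i_b,j'); furthermore, the new matching τ(𝐈',J') is obtained from τ(𝐈,J) by replacing the strands (i_a,j) and (i_b,j') by (i_b,i_a) and (j,j'). -/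
/-- A `(k,n)`-partial noncrossing pairing: a noncrossing matching `τ` (a set of pairs
`(a,b)` with `a < b`, pairwise disjoint endpoints in `{1,…,n}`, no two pairs crossing)
of a subset of `{1,…,n}`, together with a set `T` of marked vertices disjoint from the
endpoints, with `|T| + |τ| = k`. -/
def IsPNP (k n : ℕ) (τ : Finset (ℕ × ℕ)) (T : Finset ℕ) : Prop :=
  (∀ p ∈ τ, p.1 < p.2 ∧ p.1 ∈ Finset.Icc 1 n ∧ p.2 ∈ Finset.Icc 1 n) ∧
  T ⊆ Finset.Icc 1 n ∧
  (∀ p ∈ τ, ∀ q ∈ τ, p ≠ q → p.1 ≠ q.1 ∧ p.1 ≠ q.2 ∧ p.2 ≠ q.1 ∧ p.2 ≠ q.2) ∧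
  (∀ p ∈ τ, p.1 ∉ T ∧ p.2 ∉ T) ∧
  (∀ p ∈ τ, ∀ q ∈ τ, ¬(p.1 < q.1 ∧ q.1 < p.2 ∧ p.2 < q.2)) ∧
  T.card + τ.card = k

/-- The map `θ` from partial noncrossing pairings to pairs of `k`-subsets:
`I₁ = T ∪ {smaller endpoints}`, `I₂ = T ∪ {larger endpoints}`. -/
def theta (τ : Finset (ℕ × ℕ)) (T : Finset ℕ) : Finset ℕ × Finset ℕ :=
  (T ∪ τ.image Prod.fst, T ∪ τ.image Prod.snd)

/-- `(I,J)` is a standard pair of `k`-subsets of `{1,…,n}`: the `r`-th smallest element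
of `I` is at most the `r`-th smallest element of `J` for all `r` (so `I` and `J` form
the two columns of a semistandard tableau of shape `2^k`). -/
def IsStandardPair (k n : ℕ) (I J : Finset ℕ) : Prop :=
  I.card = k ∧ J.card = k ∧ I ⊆ Finset.Icc 1 n ∧ J ⊆ Finset.Icc 1 n ∧
  ∀ r, r < k → (I.sort (· ≤ ·)).getD r 0 ≤ (J.sort (· ≤ ·)).getD r 0

/-- `τ` is the partial noncrossing matching `θ⁻¹(I,J)` associated to the pair `(I,J)`:
the marked vertices are `I ∩ J`, and `θ` sends `(τ, I ∩ J)` to `(I,J)`. -/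
def Matching (k n : ℕ) (I J : Finset ℕ) (τ : Finset (ℕ × ℕ)) : Prop :=
  IsPNP k n τ (I ∩ J) ∧ (I ∩ J) ∪ τ.image Prod.fst = I ∧ (I ∩ J) ∪ τ.image Prod.snd = J

/-- Strand `s` is nested under strand `t` (strands are pairs `(i,j)` with `i < j`):
`t.1 < s.1 < s.2 < t.2`. -/
def Nested (s t : ℕ × ℕ) : Prop := t.1 < s.1 ∧ s.2 < t.2

/-- `s` is nested immediately under `t` in the matching `τ`: `s` is nested under `t`,
`t ∈ τ`, and no strand of `τ` lies strictly between them. -/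
def NestedImmediatelyUnder (τ : Finset (ℕ × ℕ)) (s t : ℕ × ℕ) : Prop :=
  t ∈ τ ∧ Nested s t ∧ ¬∃ u ∈ τ, Nested s u ∧ Nested u t

/-!
For a matching `τ` of `(I, J)`, the number of elements of `I` below `x` exceeds that of `J`
by the number of strands `(p, q)` with `p < x ≤ q`, while standardness of a pair says that
the second set never has more elements below `x` than the first. Swapping `i_a` and `j`
removes `i_a` from the elements of `I` below `j` and adds it to those of `J`, so standardness
of the swapped pair forces a second strand `(p, q)` with `p < j ≤ q`; by noncrossing it
encloses `(i_a, j)`, and the innermost such strand `(i_b, j')` is the unique one immediately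
above it. Rewiring `(i_a, j), (i_b, j')` into `(i_b, i_a), (j, j')` exchanges exactly `i_a`
and `j` between the two endpoint sets, and it creates no crossing because no strand lies
between `(i_a, j)` and `(i_b, j')`.
-/

open Finset

theorem Finset.image_univ_update {α β : Type*} [Fintype α] [DecidableEq α] [DecidableEq β]
    {f : α → β} (hf : Function.Injective f) (a : α) (b : β) :
    univ.image (Function.update f a b) = insert b ((univ.image f).erase (f a)) := by
  ext y
  simp only [mem_image, mem_univ, true_and, mem_insert, mem_erase]
  constructor
  · rintro ⟨c, rfl⟩
    by_cases hc : c = a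
    · simp [hc]
    · simp [Function.update_of_ne hc, hf.ne hc]
  · rintro (rfl | ⟨hy, c, rfl⟩)
    · exact ⟨a, Function.update_self ..⟩
    · exact ⟨c, Function.update_of_ne (by rintro rfl; exact hy rfl) ..⟩

theorem Finset.insert_erase_inter_insert_erase {α : Type*} [DecidableEq α] {I J : Finset α}
    {a b : α} (ha : a ∉ J) (hb : b ∉ I) (hab : a ≠ b) :
    insert b (I.erase a) ∩ insert a (J.erase b) = I ∩ J := by
  ext x
  simp only [mem_inter, mem_insert, mem_erase]
  grind

theorem Finset.card_filter_union_image {α β : Type*} [DecidableEq β] {T : Finset β}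
    {τ : Finset α} {f : α → β} (hf : Set.InjOn f τ) (hT : Disjoint T (τ.image f))
    (P : β → Prop) [DecidablePred P] :
    #((T ∪ τ.image f).filter P) = #(T.filter P) + #(τ.filter fun a => P (f a)) := by
  rw [filter_union, card_union_of_disjoint (disjoint_filter_filter hT), filter_image,
    card_image_of_injOn (hf.mono (filter_subset _ _))]

theorem Finset.count_mem_eq_card_filter_lt (S : Finset ℕ) (x : ℕ) :
    Nat.count (· ∈ S) x = #(S.filter (· < x)) := by
  rw [Nat.count_eq_card_filter_range]
  congr 1
  ext y
  simp [and_comm]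

theorem Finset.count_mem_le_card (S : Finset ℕ) (x : ℕ) : Nat.count (· ∈ S) x ≤ #S := by
  simpa using Nat.count_le_card S.finite_toSet x

theorem Finset.sort_getD_eq_nth (S : Finset ℕ) (r : ℕ) :
    (S.sort (· ≤ ·)).getD r 0 = Nat.nth (· ∈ S) r := by
  rw [Nat.nth_eq_getD_sort (p := (· ∈ S)) S.finite_toSet]
  simp

theorem IsStandardPair.card_filter_lt_le {k n : ℕ} {I J : Finset ℕ} (h : IsStandardPair k n I J)
    (x : ℕ) : #(J.filter (· < x)) ≤ #(I.filter (· < x)) := by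
  obtain ⟨hI, hJ, -, -, hle⟩ := h
  rw [← count_mem_eq_card_filter_lt, ← count_mem_eq_card_filter_lt]
  rcases Nat.eq_zero_or_eq_succ_pred (Nat.count (· ∈ J) x) with hc | hc
  · simp [hc]
  set c := (Nat.count (· ∈ J) x).pred
  have hck : c < k := by have := J.count_mem_le_card x; omega
  have hJx : Nat.nth (· ∈ J) c < x := Nat.nth_lt_of_lt_count (by omega)
  have hIx : Nat.nth (· ∈ I) c < x := by
    have := hle c hck
    rw [sort_getD_eq_nth, sort_getD_eq_nth] at this
    omega
  calc Nat.count (· ∈ J) x = c + 1 := hc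
    _ = Nat.count (· ∈ I) (Nat.nth (· ∈ I) c + 1) :=
      (Nat.count_nth_succ fun hf => by simpa [hI] using hck).symm
    _ ≤ Nat.count (· ∈ I) x := Nat.count_monotone _ hIx

def Compatible (p q : ℕ × ℕ) : Prop :=
  p.2 < q.1 ∨ q.2 < p.1 ∨ Nested p q ∨ Nested q p

theorem Compatible.symm {p q : ℕ × ℕ} (h : Compatible p q) : Compatible q p := by
  unfold Compatible at *
  tauto

instance : Std.Symm Compatible := ⟨fun _ _ => Compatible.symm⟩

theorem NestedImmediatelyUnder.not_between {τ : Finset (ℕ × ℕ)} {s t u : ℕ × ℕ}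
    (h : NestedImmediatelyUnder τ s t) (hu : u ∈ τ) :
    ¬(t.1 < u.1 ∧ u.1 < s.1 ∧ s.2 < u.2 ∧ u.2 < t.2) :=
  fun ⟨h₁, h₂, h₃, h₄⟩ => h.2.2 ⟨u, hu, ⟨h₂, h₃⟩, ⟨h₁, h₄⟩⟩

theorem exists_nestedImmediatelyUnder {τ : Finset (ℕ × ℕ)} {s : ℕ × ℕ}
    (hs : ∃ t ∈ τ, Nested s t) : ∃ t, NestedImmediatelyUnder τ s t := by
  classical
  obtain ⟨t, ht, hmax⟩ :=
    (τ.filter (Nested s ·)).exists_max_image Prod.fst (by simpa [Finset.Nonempty] using hs)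
  rw [mem_filter] at ht
  refine ⟨t, ht.1, ht.2, fun ⟨u, hu, hsu, hut⟩ => ?_⟩
  have := hmax u (mem_filter.2 ⟨hu, hsu⟩)
  exact absurd hut.1 (by omega)

namespace IsPNP

variable {k n : ℕ} {τ : Finset (ℕ × ℕ)} {T : Finset ℕ} {s t : ℕ × ℕ}

theorem fst_lt_snd (h : IsPNP k n τ T) (hs : s ∈ τ) : s.1 < s.2 := (h.1 s hs).1

theorem fst_notMem (h : IsPNP k n τ T) (hs : s ∈ τ) : s.1 ∉ T := (h.2.2.2.1 s hs).1

theorem snd_notMem (h : IsPNP k n τ T) (hs : s ∈ τ) : s.2 ∉ T := (h.2.2.2.1 s hs).2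

theorem pairwise_compatible (h : IsPNP k n τ T) : (τ : Set (ℕ × ℕ)).Pairwise Compatible := by
  intro p hp q hq hpq
  have := h.fst_lt_snd hp
  have := h.fst_lt_snd hq
  have := h.2.2.1 p hp q hq hpq
  have := h.2.2.2.2.1 p hp q hq
  have := h.2.2.2.2.1 q hq p hp
  unfold Compatible Nested
  omega

theorem compatible (h : IsPNP k n τ T) (hs : s ∈ τ) (ht : t ∈ τ) (hst : s ≠ t) :
    Compatible s t :=
  h.pairwise_compatible hs ht hst

theorem of_pairwise_compatible
    (hbound : ∀ p ∈ τ, p.1 < p.2 ∧ p.1 ∈ Icc 1 n ∧ p.2 ∈ Icc 1 n) (hT : T ⊆ Icc 1 n)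
    (hdisj : ∀ p ∈ τ, p.1 ∉ T ∧ p.2 ∉ T) (hcomp : (τ : Set (ℕ × ℕ)).Pairwise Compatible)
    (hcard : #T + #τ = k) : IsPNP k n τ T := by
  refine ⟨hbound, hT, fun p hp q hq hpq => ?_, hdisj, fun p hp q hq => ?_, hcard⟩
  · have := hcomp hp hq hpq
    have := (hbound p hp).1
    have := (hbound q hq).1
    unfold Compatible Nested at *
    omega
  · by_cases hpq : p = q
    · subst hpq
      omega
    have := hcomp hp hq hpq
    unfold Compatible Nested at *
    omega

theorem injOn_fst (h : IsPNP k n τ T) : Set.InjOn Prod.fst (τ : Set (ℕ × ℕ)) := by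
  intro p hp q hq hpq
  by_contra hne
  exact (h.2.2.1 p hp q hq hne).1 hpq

theorem injOn_snd (h : IsPNP k n τ T) : Set.InjOn Prod.snd (τ : Set (ℕ × ℕ)) := by
  intro p hp q hq hpq
  by_contra hne
  exact (h.2.2.1 p hp q hq hne).2.2.2 hpq

theorem disjoint_image_fst (h : IsPNP k n τ T) : Disjoint T (τ.image Prod.fst) :=
  disjoint_left.2 fun _ hx hx' =>
    let ⟨_, hp, hpx⟩ := mem_image.1 hx'
    h.fst_notMem hp (hpx ▸ hx)

theorem disjoint_image_snd (h : IsPNP k n τ T) : Disjoint T (τ.image Prod.snd) :=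
  disjoint_left.2 fun _ hx hx' =>
    let ⟨_, hp, hpx⟩ := mem_image.1 hx'
    h.snd_notMem hp (hpx ▸ hx)

theorem existsUnique_nestedImmediatelyUnder (h : IsPNP k n τ T) (hs : s ∈ τ)
    (hnest : ∃ t ∈ τ, Nested s t) : ∃! t, t ∈ τ ∧ NestedImmediatelyUnder τ s t := by
  obtain ⟨t, ht⟩ := exists_nestedImmediatelyUnder hnest
  refine ⟨t, ⟨ht.1, ht⟩, fun t' ⟨ht'τ, ht'⟩ => ?_⟩
  by_contra hne
  have := h.compatible ht'τ ht.1 hne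
  have := h.fst_lt_snd hs
  have := ht.not_between ht'τ
  have := ht'.not_between ht.1
  have := ht.2.1
  have := ht'.2.1
  unfold Compatible Nested at *
  omega

end IsPNP

def exchangeStrands (τ : Finset (ℕ × ℕ)) (s t : ℕ × ℕ) : Finset (ℕ × ℕ) :=
  insert (t.1, s.1) (insert (s.2, t.2) ((τ.erase s).erase t))

theorem mem_exchangeStrands {τ : Finset (ℕ × ℕ)} {s t u : ℕ × ℕ} :
    u ∈ exchangeStrands τ s t ↔ u = (t.1, s.1) ∨ u = (s.2, t.2) ∨ (u ∈ τ ∧ u ≠ s ∧ u ≠ t) := by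
  simp only [exchangeStrands, mem_insert, mem_erase]
  tauto

section exchange

variable {k n : ℕ} {τ : Finset (ℕ × ℕ)} {T : Finset ℕ} {s t : ℕ × ℕ}
  (hP : IsPNP k n τ T) (hs : s ∈ τ) (hst : NestedImmediatelyUnder τ s t)
include hP hs hst

-- A strand crossing a new one would have to lie strictly between `s` and `t`.
theorem compatible_exchangeStrands_of_mem {u : ℕ × ℕ} (hu : u ∈ τ) (hus : u ≠ s) (hut : u ≠ t) :
    Compatible (t.1, s.1) u ∧ Compatible (s.2, t.2) u := by
  have := hP.compatible hu hs hus
  have := hP.compatible hu hst.1 hut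
  have := hst.not_between hu
  have := hst.2.1
  have := hP.fst_lt_snd hu
  have := hP.fst_lt_snd hs
  unfold Compatible Nested at *
  omega

theorem pairwise_compatible_exchangeStrands :
    (exchangeStrands τ s t : Set (ℕ × ℕ)).Pairwise Compatible := by
  have hlt := hP.fst_lt_snd hs
  rw [exchangeStrands, coe_insert, coe_insert, Set.pairwise_insert_of_symm,
    Set.pairwise_insert_of_symm]
  refine ⟨⟨hP.pairwise_compatible.mono ?_, fun u hu _ => ?_⟩, fun u hu _ => ?_⟩
  · exact fun u hu => mem_of_mem_erase (mem_of_mem_erase hu)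
  · rw [mem_coe, mem_erase, mem_erase] at hu
    obtain ⟨hut, hus, hu⟩ := hu
    exact (compatible_exchangeStrands_of_mem hP hs hst hu hus hut).2
  · rw [Set.mem_insert_iff, mem_coe, mem_erase, mem_erase] at hu
    obtain rfl | ⟨hut, hus, hu⟩ := hu
    · exact .inl hlt
    · exact (compatible_exchangeStrands_of_mem hP hs hst hu hus hut).1

theorem card_exchangeStrands : #(exchangeStrands τ s t) = #τ := by
  obtain ⟨ht, ⟨hts, hst⟩, -⟩ := hst
  have hlt := hP.fst_lt_snd hs
  have hnew₁ : (t.1, s.1) ∉ τ := fun h => by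
    have := congrArg Prod.snd (hP.injOn_fst h ht rfl)
    simp only at this
    omega
  have hnew₂ : (s.2, t.2) ∉ τ := fun h => by
    have := congrArg Prod.fst (hP.injOn_snd h ht rfl)
    simp only at this
    omega
  have hts : t ≠ s := by rintro rfl; omega
  have h2 : 1 < #τ := one_lt_card.2 ⟨s, hs, t, ht, hts.symm⟩
  rw [exchangeStrands, card_insert_of_notMem, card_insert_of_notMem,
    card_erase_of_mem (mem_erase.2 ⟨hts, ht⟩), card_erase_of_mem hs]
  · omega
  · exact fun h => hnew₂ (mem_of_mem_erase (mem_of_mem_erase h))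
  · simp only [mem_insert, mem_erase, Prod.ext_iff, not_or]
    exact ⟨by omega, fun h => hnew₁ h.2.2⟩

theorem image_fst_exchangeStrands :
    (exchangeStrands τ s t).image Prod.fst = insert s.2 ((τ.image Prod.fst).erase s.1) := by
  ext x
  simp only [mem_image, mem_insert, mem_erase, mem_exchangeStrands]
  constructor
  · rintro ⟨u, rfl | rfl | ⟨hu, hus, -⟩, rfl⟩
    · exact .inr ⟨hst.2.1.1.ne, t, hst.1, rfl⟩
    · exact .inl rfl
    · exact .inr ⟨fun h => hus (hP.injOn_fst hu hs h), u, hu, rfl⟩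
  · rintro (rfl | ⟨hx, u, hu, rfl⟩)
    · exact ⟨_, .inr (.inl rfl), rfl⟩
    · by_cases hut : u = t
      · exact ⟨_, .inl rfl, by rw [hut]⟩
      · exact ⟨u, .inr (.inr ⟨hu, by rintro rfl; exact hx rfl, hut⟩), rfl⟩

theorem image_snd_exchangeStrands :
    (exchangeStrands τ s t).image Prod.snd = insert s.1 ((τ.image Prod.snd).erase s.2) := by
  ext x
  simp only [mem_image, mem_insert, mem_erase, mem_exchangeStrands]
  constructor
  · rintro ⟨u, rfl | rfl | ⟨hu, hus, -⟩, rfl⟩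
    · exact .inl rfl
    · exact .inr ⟨hst.2.1.2.ne', t, hst.1, rfl⟩
    · exact .inr ⟨fun h => hus (hP.injOn_snd hu hs h), u, hu, rfl⟩
  · rintro (rfl | ⟨hx, u, hu, rfl⟩)
    · exact ⟨_, .inl rfl, rfl⟩
    · by_cases hut : u = t
      · exact ⟨_, .inr (.inl rfl), by rw [hut]⟩
      · exact ⟨u, .inr (.inr ⟨hu, by rintro rfl; exact hx rfl, hut⟩), rfl⟩

theorem IsPNP.exchange : IsPNP k n (exchangeStrands τ s t) T := by
  refine .of_pairwise_compatible (fun p hp => ?_) hP.2.1 (fun p hp => ?_)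
    (pairwise_compatible_exchangeStrands hP hs hst)
    (by rw [card_exchangeStrands hP hs hst]; exact hP.2.2.2.2.2)
  · rcases mem_exchangeStrands.1 hp with rfl | rfl | ⟨hp, -, -⟩
    · exact ⟨hst.2.1.1, (hP.1 t hst.1).2.1, (hP.1 s hs).2.1⟩
    · exact ⟨hst.2.1.2, (hP.1 s hs).2.2, (hP.1 t hst.1).2.2⟩
    · exact hP.1 p hp
  · rcases mem_exchangeStrands.1 hp with rfl | rfl | ⟨hp, -, -⟩
    · exact ⟨hP.fst_notMem (s := t) hst.1, hP.fst_notMem hs⟩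
    · exact ⟨hP.snd_notMem hs, hP.snd_notMem (s := t) hst.1⟩
    · exact hP.2.2.2.1 p hp

end exchange

namespace Matching

variable {k n : ℕ} {I J : Finset ℕ} {τ : Finset (ℕ × ℕ)} {s t : ℕ × ℕ}

theorem card_left (hM : Matching k n I J τ) : #I = k := by
  rw [← hM.2.1, card_union_of_disjoint hM.1.disjoint_image_fst,
    card_image_of_injOn hM.1.injOn_fst, hM.1.2.2.2.2.2]

theorem fst_mem_left (hM : Matching k n I J τ) (hs : s ∈ τ) : s.1 ∈ I :=
  hM.2.1 ▸ mem_union_right _ (mem_image_of_mem _ hs)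

theorem fst_notMem_right (hM : Matching k n I J τ) (hs : s ∈ τ) : s.1 ∉ J := by
  rw [← hM.2.2, mem_union, mem_image, not_or]
  refine ⟨hM.1.fst_notMem hs, fun ⟨u, hu, hus⟩ => ?_⟩
  by_cases h : u = s
  · subst h
    exact (hM.1.fst_lt_snd hu).ne' hus
  · exact (hM.1.2.2.1 u hu s hs h).2.2.1 hus

theorem snd_notMem_left (hM : Matching k n I J τ) (hs : s ∈ τ) : s.2 ∉ I := by
  rw [← hM.2.1, mem_union, mem_image, not_or]
  refine ⟨hM.1.snd_notMem hs, fun ⟨u, hu, hus⟩ => ?_⟩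
  by_cases h : u = s
  · subst h
    exact (hM.1.fst_lt_snd hu).ne hus
  · exact (hM.1.2.2.1 u hu s hs h).2.1 hus

theorem card_filter_lt_left (hM : Matching k n I J τ) (x : ℕ) :
    #(I.filter (· < x)) = #(J.filter (· < x)) + #(τ.filter fun p => p.1 < x ∧ x ≤ p.2) := by
  have hI : #(I.filter (· < x)) = #((I ∩ J).filter (· < x)) + #(τ.filter (·.1 < x)) := by
    have := card_filter_union_image hM.1.injOn_fst hM.1.disjoint_image_fst (· < x)
    rwa [hM.2.1] at this
  have hJ : #(J.filter (· < x)) = #((I ∩ J).filter (· < x)) + #(τ.filter (·.2 < x)) := by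
    have := card_filter_union_image hM.1.injOn_snd hM.1.disjoint_image_snd (· < x)
    rwa [hM.2.2] at this
  have hsplit : τ.filter (·.1 < x) =
      τ.filter (·.2 < x) ∪ τ.filter fun p => p.1 < x ∧ x ≤ p.2 := by
    ext p
    simp only [mem_filter, mem_union]
    by_cases hp : p ∈ τ
    · have := hM.1.fst_lt_snd hp
      simp only [hp, true_and]
      omega
    · simp [hp]
  have hfst : #(τ.filter (·.1 < x)) =
      #(τ.filter (·.2 < x)) + #(τ.filter fun p => p.1 < x ∧ x ≤ p.2) := by
    rw [hsplit, card_union_of_disjoint (disjoint_filter.2 fun _ _ h₁ h₂ => by omega)]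
  omega

theorem exists_nested_of_isStandardPair (hM : Matching k n I J τ) (hs : s ∈ τ)
    (hstd : IsStandardPair k n (insert s.2 (I.erase s.1)) (insert s.1 (J.erase s.2))) :
    ∃ t ∈ τ, Nested s t := by
  have hlt := hM.1.fst_lt_snd hs
  have hI : #((insert s.2 (I.erase s.1)).filter (· < s.2)) + 1 = #(I.filter (· < s.2)) := by
    rw [filter_insert, if_neg (lt_irrefl _), filter_erase,
      card_erase_add_one (mem_filter.2 ⟨hM.fst_mem_left hs, hlt⟩)]
  have hJ : #((insert s.1 (J.erase s.2)).filter (· < s.2)) = #(J.filter (· < s.2)) + 1 := by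
    rw [filter_insert, if_pos hlt, filter_erase, erase_eq_of_notMem (by simp),
      card_insert_of_notMem (by simp [hM.fst_notMem_right hs])]
  have hcount := hstd.card_filter_lt_le s.2
  rw [hM.card_filter_lt_left] at hI
  obtain ⟨t, ht, hts⟩ := exists_mem_ne (s := τ.filter fun p => p.1 < s.2 ∧ s.2 ≤ p.2)
    (by omega) s
  rw [mem_filter] at ht
  refine ⟨t, ht.1, ?_⟩
  have := hM.1.compatible ht.1 hs hts
  unfold Compatible Nested at *
  omega

theorem exchange (hM : Matching k n I J τ) (hs : s ∈ τ) (hst : NestedImmediatelyUnder τ s t) :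
    Matching k n (insert s.2 (I.erase s.1)) (insert s.1 (J.erase s.2)) (exchangeStrands τ s t) := by
  obtain ⟨hP, hI, hJ⟩ := id hM
  have hT : insert s.2 (I.erase s.1) ∩ insert s.1 (J.erase s.2) = I ∩ J :=
    insert_erase_inter_insert_erase (hM.fst_notMem_right hs) (hM.snd_notMem_left hs)
      (hP.fst_lt_snd hs).ne
  refine ⟨hT ▸ hP.exchange hs hst, ?_, ?_⟩
  · rw [hT, image_fst_exchangeStrands hP hs hst, union_insert]
    conv_rhs => rw [← hI]
    rw [erase_union_distrib, erase_eq_of_notMem (hP.fst_notMem hs)]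
  · rw [hT, image_snd_exchangeStrands hP hs hst, union_insert]
    conv_rhs => rw [← hJ]
    rw [erase_union_distrib, erase_eq_of_notMem (hP.snd_notMem hs)]

end Matching

/-- If `(i_a, j)` is a strand of `τ(II,J)` and swapping `i_a` with `j` yields a standard
pair, then there is a unique strand `(i_b, j')` of `τ(II,J)` under which `(i_a,j)` is
nested immediately; moreover the matching of the swapped pair is obtained from `τ` by
replacing the strands `(i_a,j)` and `(i_b,j')` by `(i_b,i_a)` and `(j,j')`. -/
theorem stmt_8 (k n : ℕ) (II : Fin k → ℕ) (J : Finset ℕ) (τ : Finset (ℕ × ℕ))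
    (a : Fin k) (j : ℕ)
    (hM : Matching k n (Finset.univ.image II) J τ)
    (hstrand : (II a, j) ∈ τ)
    (hstd : IsStandardPair k n (Finset.univ.image (Function.update II a j))
      (insert (II a) (J.erase j))) :
    (∃! pq : ℕ × ℕ, pq ∈ τ ∧ NestedImmediatelyUnder τ (II a, j) pq) ∧
    ∀ pq ∈ τ, NestedImmediatelyUnder τ (II a, j) pq →
      Matching k n (Finset.univ.image (Function.update II a j)) (insert (II a) (J.erase j))
        (insert (pq.1, II a) (insert (j, pq.2) ((τ.erase (II a, j)).erase pq))) := by
  have hII : Function.Injective II := by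
    rw [← Set.injOn_univ, ← coe_univ, ← card_image_iff, hM.card_left, card_univ,
      Fintype.card_fin]
  rw [image_univ_update hII] at hstd ⊢
  exact ⟨hM.1.existsUnique_nestedImmediatelyUnder hstrand
      (hM.exists_nested_of_isStandardPair hstrand hstd),
    fun pq _ hpq => hM.exchange hstrand hpq⟩
end
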